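/- arXiv:1709.09221 — 5 statements merged into one kernel-verified Lean document; each statement's English description precedes it below -/
import Mathlib

section
/- Let s > 0 be a real number and (a_k)_{k≥1} a sequence of real numbers. If the limit lim_{n→∞} n^{-s} · (a_1 + a_2 + … + a_n) exists and equals L, then the limit lim_{n→∞} (1/n) · Σ_{k=1}^n k^{1-s} a_k exists and equals s·L. -/
open Filter Topology

/-!
Write `A k = a 1 + ⋯ + a k`, so that `b k = k ^ (-s) * A k → L`. Abel summation gives
`∑_{k ≤ n} k ^ (1 - s) a k = n ^ (1 - s) A n - ∑_{k < n} ((k + 1) ^ (1 - s) - k ^ (1 - s)) A k`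
(the `k = 0` term vanishes as `A 0 = 0`). After dividing by `n`, the first term is `b n`, and the
sum is the Cesàro mean of `c k * b k` with `c k = k ^ s ((k + 1) ^ (1 - s) - k ^ (1 - s))`, which
tends to `1 - s`, the derivative of `x ^ (1 - s)` at `1`. Hence the limit is `L - (1 - s) L = s L`.
-/

theorem sum_Icc_one_mul_by_parts {R : Type*} [CommRing R] (f a : ℕ → R) (n : ℕ) :
    ∑ k ∈ Finset.Icc 1 n, f k * a k =
      f n * ∑ k ∈ Finset.Icc 1 n, a k +
        ∑ k ∈ Finset.range n, (f k - f (k + 1)) * ∑ j ∈ Finset.Icc 1 k, a j := by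
  induction n with
  | zero => simp
  | succ n ih =>
    rw [Finset.sum_Icc_succ_top (by omega), ih, Finset.sum_range_succ,
      Finset.sum_Icc_succ_top (by omega : 1 ≤ n + 1) a]
    ring

theorem tendsto_rpow_one_sub_mul_add_one_rpow_sub_rpow (p : ℝ) :
    Tendsto (fun x : ℝ => x ^ (1 - p) * ((x + 1) ^ p - x ^ p)) atTop (𝓝 p) := by
  have hderiv : HasDerivAt (fun y : ℝ => y ^ p) p 1 := by
    simpa using Real.hasDerivAt_rpow_const (x := 1) (p := p) (Or.inl one_ne_zero)
  have hslope := (hasDerivAt_iff_tendsto_slope_zero.mp hderiv).comp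
    (tendsto_inv_atTop_nhdsGT_zero.mono_right (nhdsGT_le_nhdsNE 0))
  refine hslope.congr' ?_
  filter_upwards [eventually_gt_atTop 0] with x hx
  simp only [Function.comp_apply, inv_inv, smul_eq_mul, Real.one_rpow]
  have hxp : x ^ p ≠ 0 := (Real.rpow_pos_of_pos hx p).ne'
  rw [Real.rpow_sub hx, Real.rpow_one, show 1 + x⁻¹ = (x + 1) / x by field_simp,
    Real.div_rpow (by positivity) hx.le]
  field_simp

theorem stmt0_general (s : ℝ) (a : ℕ → ℝ) (L : ℝ)
    (h : Tendsto (fun n : ℕ => (n : ℝ) ^ (-s) * ∑ k ∈ Finset.Icc 1 n, a k)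
      atTop (nhds L)) :
    Tendsto (fun n : ℕ => (1 / (n : ℝ)) * ∑ k ∈ Finset.Icc 1 n, (k : ℝ) ^ (1 - s) * a k)
      atTop (nhds (s * L)) := by
  set b : ℕ → ℝ := fun n => (n : ℝ) ^ (-s) * ∑ k ∈ Finset.Icc 1 n, a k
  set c : ℕ → ℝ := fun k => (k : ℝ) ^ s * (((k : ℝ) + 1) ^ (1 - s) - (k : ℝ) ^ (1 - s))
  have hc : Tendsto c atTop (𝓝 (1 - s)) := by
    simpa [c, Function.comp_def] using
      (tendsto_rpow_one_sub_mul_add_one_rpow_sub_rpow (1 - s)).comp tendsto_natCast_atTop_atTop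
  have hterm (k : ℕ) :
      ((k : ℝ) ^ (1 - s) - ((k + 1 : ℕ) : ℝ) ^ (1 - s)) * ∑ j ∈ Finset.Icc 1 k, a j =
        -(c k * b k) := by
    rcases Nat.eq_zero_or_pos k with rfl | hk
    · simp [b]
    · have hk' : (0 : ℝ) < k := by exact_mod_cast hk
      simp only [c, b]
      push_cast
      rw [mul_mul_mul_comm, ← Real.rpow_add hk', add_neg_cancel, Real.rpow_zero]
      ring
  have hsplit (n : ℕ) (hn : 0 < n) :
      (1 / (n : ℝ)) * ∑ k ∈ Finset.Icc 1 n, (k : ℝ) ^ (1 - s) * a k =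
        b n + -((n : ℝ)⁻¹ * ∑ k ∈ Finset.range n, c k * b k) := by
    have hn' : (0 : ℝ) < n := by exact_mod_cast hn
    rw [sum_Icc_one_mul_by_parts (fun k : ℕ => (k : ℝ) ^ (1 - s)) a n]
    simp only [hterm, Finset.sum_neg_distrib, b, Real.rpow_neg hn'.le, Real.rpow_sub hn',
      Real.rpow_one]
    field_simp
  have hlim := h.add ((hc.mul h).cesaro.neg)
  rw [show L + -((1 - s) * L) = s * L by ring] at hlim
  exact hlim.congr' (eventually_atTop.mpr ⟨1, fun n hn => (hsplit n hn).symm⟩)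

/-- If `lim_{n→∞} n^{-s} ∑_{k=1}^n a_k = L` for `s > 0`, then
`lim_{n→∞} (1/n) ∑_{k=1}^n k^{1-s} a_k = s·L`. -/
theorem stmt0 (s : ℝ) (hs : 0 < s) (a : ℕ → ℝ) (L : ℝ)
    (h : Tendsto (fun n : ℕ => (n : ℝ) ^ (-s) * ∑ k ∈ Finset.Icc 1 n, a k)
      atTop (nhds L)) :
    Tendsto (fun n : ℕ => (1 / (n : ℝ)) * ∑ k ∈ Finset.Icc 1 n, (k : ℝ) ^ (1 - s) * a k)
      atTop (nhds (s * L)) :=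
  stmt0_general s a L h
end

section
/- Let s > 0 be a real number and (a_k)_{k≥1} a sequence of real numbers. If the limit lim_{n→∞} (1/n) · Σ_{k=1}^n k^{1-s} a_k exists and equals M, then the limit lim_{n→∞} n^{-s} · (a_1 + a_2 + … + a_n) exists and equals M/s. -/
/-!
Put `B n = ∑_{k=1}^n k^{1-s} a_k`, so that `B n / n → M`. Summation by parts against the weights
`k^{s-1}` gives `n^{-s} ∑_{k=1}^n a_k = B n / n - n^{-s} ∑_{k<n} ((k+1)^{s-1} - k^{s-1}) B k`.
As `n^s = ∑_{k<n} ((k+1)^s - k^s)`, the last term is an average with positive weights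
`(k+1)^s - k^s` of `k ((k+1)^{s-1} - k^{s-1}) / ((k+1)^s - k^s) · B k / k`. The first factor is a
ratio of difference quotients of `x^{s-1}` and `x^s` at `1` (with `x = (k+1)/k`), so it tends to
`(s-1)/s`; hence the limit is `M - (s-1)/s · M = M/s`.
-/

open Filter Finset Topology Asymptotics

theorem sum_Icc_mul_eq_mul_sum_sub_sum_range {R : Type*} [CommRing R] (w b : ℕ → R) (n : ℕ) :
    ∑ k ∈ Icc 1 n, w k * b k =
      w n * ∑ k ∈ Icc 1 n, b k - ∑ k ∈ range n, (w (k + 1) - w k) * ∑ j ∈ Icc 1 k, b j := by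
  induction n with
  | zero => simp
  | succ n ih =>
    rw [sum_Icc_succ_top (by omega), sum_Icc_succ_top (by omega), sum_range_succ, ih]
    ring

theorem tendsto_sum_range_mul_div_sum_range {p c : ℕ → ℝ} {L : ℝ} (hp : 0 ≤ p)
    (hP : Tendsto (fun n => ∑ i ∈ range n, p i) atTop atTop) (hc : Tendsto c atTop (𝓝 L)) :
    Tendsto (fun n => (∑ i ∈ range n, p i * c i) / ∑ i ∈ range n, p i) atTop (𝓝 L) := by
  have hsmall : (fun i => p i * (c i - L)) =o[atTop] p := by
    simpa using (isBigO_refl p atTop).mul_isLittleO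
      ((isLittleO_one_iff ℝ).2 (tendsto_sub_nhds_zero_iff.2 hc))
  have := ((hsmall.sum_range hp hP).tendsto_div_nhds_zero).add_const L
  rw [zero_add] at this
  refine this.congr' ?_
  filter_upwards [hP.eventually_gt_atTop 0] with n hn
  simp only [mul_sub, sum_sub_distrib, ← sum_mul]
  field_simp
  ring

theorem tendsto_rpow_sub_one_div_rpow_sub_one {r s : ℝ} (hs : s ≠ 0) :
    Tendsto (fun x : ℝ => (x ^ r - 1) / (x ^ s - 1)) (𝓝[≠] 1) (𝓝 (r / s)) := by
  have hr := (Real.hasDerivAt_rpow_const (p := r) (Or.inl one_ne_zero)).tendsto_slope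
  have hs' := (Real.hasDerivAt_rpow_const (p := s) (Or.inl one_ne_zero)).tendsto_slope
  simp only [Real.one_rpow, mul_one] at hr hs'
  refine (hr.div hs' hs).congr' ?_
  filter_upwards [self_mem_nhdsWithin] with x hx
  rw [Pi.div_apply, slope_def_field, slope_def_field, Real.one_rpow, Real.one_rpow,
    div_div_div_cancel_right₀ (sub_ne_zero.2 hx)]

theorem tendsto_rpow_add_one_sub_rpow_div_mul_rpow {r s : ℝ} (hs : 0 < s) :
    Tendsto (fun k : ℕ => ((k + 1 : ℝ) ^ r - (k : ℝ) ^ r) / ((k + 1 : ℝ) ^ s - (k : ℝ) ^ s)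
      * (k : ℝ) ^ (s - r)) atTop (𝓝 (r / s)) := by
  have hx : Tendsto (fun k : ℕ => ((k : ℝ) + 1) / k) atTop (𝓝[≠] 1) := by
    refine tendsto_nhdsWithin_iff.2 ⟨?_, ?_⟩
    · simpa using (tendsto_natCast_div_add_atTop (1 : ℝ)).inv₀ one_ne_zero
    · filter_upwards [eventually_gt_atTop 0] with k hk
      rw [Set.mem_compl_singleton_iff, ne_eq, div_eq_one_iff_eq (by positivity)]
      exact (lt_add_one _).ne'
  refine ((tendsto_rpow_sub_one_div_rpow_sub_one hs.ne').comp hx).congr' ?_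
  filter_upwards [eventually_gt_atTop 0] with k hk
  have hk : (0 : ℝ) < k := Nat.cast_pos.2 hk
  have hinc : (k : ℝ) ^ s < (k + 1 : ℝ) ^ s := Real.rpow_lt_rpow hk.le (lt_add_one _) hs
  simp only [Function.comp_apply]
  rw [Real.div_rpow (by positivity) hk.le, Real.div_rpow (by positivity) hk.le,
    Real.rpow_sub hk]
  have hkr : (k : ℝ) ^ r ≠ 0 := by positivity
  have hks : (k : ℝ) ^ s ≠ 0 := by positivity
  have hdiff : (k + 1 : ℝ) ^ s - (k : ℝ) ^ s ≠ 0 := (sub_pos.2 hinc).ne'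
  field_simp

theorem sum_range_rpow_add_one_sub_rpow {s : ℝ} (hs : s ≠ 0) (n : ℕ) :
    ∑ k ∈ range n, ((k + 1 : ℝ) ^ s - (k : ℝ) ^ s) = (n : ℝ) ^ s := by
  simpa [Real.zero_rpow hs] using sum_range_sub (fun k : ℕ => (k : ℝ) ^ s) n

theorem tendsto_sum_range_rpow_sub_mul_div_rpow {s M : ℝ} (hs : 0 < s) {B : ℕ → ℝ}
    (hB : Tendsto (fun k : ℕ => B k / k) atTop (𝓝 M)) :
    Tendsto (fun n : ℕ => (∑ k ∈ range n, ((k + 1 : ℝ) ^ (s - 1) - (k : ℝ) ^ (s - 1)) * B k)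
      / (n : ℝ) ^ s) atTop (𝓝 ((s - 1) / s * M)) := by
  set p : ℕ → ℝ := fun k => (k + 1 : ℝ) ^ s - (k : ℝ) ^ s
  have hp : ∀ k, 0 < p k := fun k =>
    sub_pos.2 (Real.rpow_lt_rpow (Nat.cast_nonneg _) (lt_add_one _) hs)
  have hP : ∀ n, ∑ k ∈ range n, p k = (n : ℝ) ^ s := sum_range_rpow_add_one_sub_rpow hs.ne'
  have hd : Tendsto (fun k : ℕ => ((k + 1 : ℝ) ^ (s - 1) - (k : ℝ) ^ (s - 1)) * B k / p k)
      atTop (𝓝 ((s - 1) / s * M)) := by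
    refine ((tendsto_rpow_add_one_sub_rpow_div_mul_rpow hs).mul hB).congr' ?_
    filter_upwards [eventually_gt_atTop 0] with k hk
    have hk : (k : ℝ) ≠ 0 := Nat.cast_ne_zero.2 hk.ne'
    simp only [p, sub_sub_cancel, Real.rpow_one]
    field_simp
  have hPtop : Tendsto (fun n => ∑ k ∈ range n, p k) atTop atTop := by
    simpa only [hP, Function.comp_def] using
      (tendsto_rpow_atTop hs).comp tendsto_natCast_atTop_atTop
  refine (tendsto_sum_range_mul_div_sum_range (fun k => (hp k).le) hPtop hd).congr fun n => ?_
  rw [hP]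
  congr 1
  exact sum_congr rfl fun k _ => mul_div_cancel₀ _ (hp k).ne'

theorem rpow_neg_mul_sum_Icc_eq {s : ℝ} (a : ℕ → ℝ) {n : ℕ} (hn : 0 < n) :
    (n : ℝ) ^ (-s) * ∑ k ∈ Icc 1 n, a k =
      (∑ k ∈ Icc 1 n, (k : ℝ) ^ (1 - s) * a k) / n
        - (∑ k ∈ range n, ((k + 1 : ℝ) ^ (s - 1) - (k : ℝ) ^ (s - 1))
            * ∑ j ∈ Icc 1 k, (j : ℝ) ^ (1 - s) * a j) / (n : ℝ) ^ s := by
  have ha : ∑ k ∈ Icc 1 n, a k =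
      ∑ k ∈ Icc 1 n, (k : ℝ) ^ (s - 1) * ((k : ℝ) ^ (1 - s) * a k) := by
    refine sum_congr rfl fun k hk => ?_
    have hk : (0 : ℝ) < k := Nat.cast_pos.2 (mem_Icc.1 hk).1
    rw [← mul_assoc, ← Real.rpow_add hk, sub_add_sub_cancel', sub_self, Real.rpow_zero, one_mul]
  have hn : (0 : ℝ) < n := Nat.cast_pos.2 hn
  rw [ha, sum_Icc_mul_eq_mul_sum_sub_sum_range, Real.rpow_neg hn.le, Real.rpow_sub_one hn.ne']
  push_cast
  field_simp

/-- If `lim_{n→∞} (1/n) ∑_{k=1}^n k^{1-s} a_k = M` for `s > 0`, then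
`lim_{n→∞} n^{-s} ∑_{k=1}^n a_k = M/s`. -/
theorem stmt1 (s : ℝ) (hs : 0 < s) (a : ℕ → ℝ) (M : ℝ)
    (h : Tendsto (fun n : ℕ => (1 / (n : ℝ)) * ∑ k ∈ Finset.Icc 1 n, (k : ℝ) ^ (1 - s) * a k)
      atTop (nhds M)) :
    Tendsto (fun n : ℕ => (n : ℝ) ^ (-s) * ∑ k ∈ Finset.Icc 1 n, a k)
      atTop (nhds (M / s)) := by
  have hB : Tendsto (fun n : ℕ => (∑ k ∈ Icc 1 n, (k : ℝ) ^ (1 - s) * a k) / n) atTop (𝓝 M) :=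
    h.congr fun n => one_div_mul_eq_div _ _
  have hlim := hB.sub (tendsto_sum_range_rpow_sub_mul_div_rpow hs hB)
  rw [show M - (s - 1) / s * M = M / s by field_simp; ring] at hlim
  refine hlim.congr' ?_
  filter_upwards [eventually_gt_atTop 0] with n hn
  exact (rpow_neg_mul_sum_Icc_eq a hn).symm
end

section
/- Let d, N be positive natural numbers, let H = L²([0,1], ℝ^d) be the Hilbert space of square-integrable ℝ^d-valued functions on [0,1] with Lebesgue measure, and for μ ∈ {1,…,d} let ι_μ : L²([0,1],ℝ) → H send u to t ↦ u(t)·p_μ, where p_μ is the μ-th standard basis vector of ℝ^d. Let (e_k)_{k≥1} be a weakly uniformly dense orthonormal basis of L²([0,1],ℝ). Let f : H → M_N(ℂ) be twice Fréchet differentiable at x ∈ H, and suppose that for each μ ∈ {1,…,d} there exist K^V_μ ∈ L²([0,1]×[0,1], M_N(ℂ)) and K^L_μ ∈ L^∞([0,1], M_N(ℂ)) such that for all u, v ∈ L²([0,1],ℝ): f''(x)(ι_μ u, ι_μ v) = ∫₀¹∫₀¹ K^V_μ(s,t) u(t) v(s) dt ds + ∫₀¹ K^L_μ(t) u(t) v(t)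 dt. Then lim_{n→∞} (1/n) Σ_{k=1}^n Σ_{μ=1}^d f''(x)(ι_μ e_k, ι_μ e_k) = Σ_{μ=1}^d ∫₀¹ K^L_μ(t) dt (convergence in M_N(ℂ)). -/
/-!
By the representation of `f''(x)`, the `k`-th term of the Cesàro mean splits, for each `μ`, into
a Volterra term `∫∫ e_k(s) e_k(t) K^V_μ(s,t)` and a Lévy term `∫ e_k(t)² K^L_μ(t)`.
The functions `e_k ⊗ e_k` are orthonormal in `L²([0,1]²)`, so by Bessel's inequality the Volterra
terms tend to `0`, hence so do their Cesàro means. The Cesàro mean of the Lévy terms is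
`∫ K^L_μ + ∫ ((1/n) ∑ e_k² - 1) K^L_μ`, and the last integral tends to `0` by weak uniform density.
Both limits are first proved for real-valued kernels; the matrix-valued case follows by taking
coordinates in a basis.
-/

open Filter MeasureTheory Topology

attribute [local instance] Matrix.frobeniusNormedAddCommGroup Matrix.frobeniusNormedSpace

theorem Orthonormal.tendsto_inner_atTop_zero {𝕜 E : Type*} [RCLike 𝕜] [NormedAddCommGroup E]
    [InnerProductSpace 𝕜 E] {v : ℕ → E} (hv : Orthonormal 𝕜 v) (x : E) :
    Tendsto (fun k => inner 𝕜 (v k) x) atTop (𝓝 0) := by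
  rw [tendsto_zero_iff_norm_tendsto_zero]
  have hsq := (hv.inner_products_summable (x := x)).tendsto_atTop_zero.sqrt
  simpa only [Real.sqrt_sq (norm_nonneg _), Real.sqrt_zero] using hsq

section FiniteDimensional

variable {ι α E : Type*} [MeasurableSpace α] {μ : Measure α} [NormedAddCommGroup E]
  [NormedSpace ℝ E] [FiniteDimensional ℝ E]

theorem tendsto_integral_smul_zero_of_forall_real {l : Filter ι} {p : ENNReal}
    {F : ι → α → ℝ} {g : α → E} (hg : MemLp g p μ)
    (hFg : ∀ i, Integrable (fun a => F i a • g a) μ)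
    (hF : ∀ h : α → ℝ, MemLp h p μ → Tendsto (fun i => ∫ a, F i a * h a ∂μ) l (𝓝 0)) :
    Tendsto (fun i => ∫ a, F i a • g a ∂μ) l (𝓝 0) := by
  set b := Module.finBasis ℝ E
  suffices h : Tendsto (fun i => b.equivFunL (∫ a, F i a • g a ∂μ)) l (𝓝 0) by
    simpa [Function.comp_def] using (b.equivFunL.symm.continuous.tendsto 0).comp h
  refine tendsto_pi_nhds.2 fun j => ?_
  set L : E →L[ℝ] ℝ := (ContinuousLinearMap.proj j).comp b.equivFunL.toContinuousLinearMap
  refine (hF _ (L.comp_memLp' hg)).congr fun i => ?_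
  change _ = L (∫ a, F i a • g a ∂μ)
  simp [← L.integral_comp_comm (hFg i)]

end FiniteDimensional

section Volterra

variable {α β E : Type*} [MeasurableSpace α] [MeasurableSpace β] {μ : Measure α}
  {ν : Measure β} [NormedAddCommGroup E] [NormedSpace ℝ E]

theorem L2.real_inner_def (u v : Lp ℝ 2 μ) : inner ℝ u v = ∫ a, u a * v a ∂μ := by
  simp [L2.inner_def, mul_comm]

theorem memLp_two_prod_mul [SFinite ν] (u : Lp ℝ 2 μ) (v : Lp ℝ 2 ν) :
    MemLp (fun z : α × β => u z.1 * v z.2) 2 (μ.prod ν) := by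
  have hm : AEStronglyMeasurable (fun z : α × β => u z.1 * v z.2) (μ.prod ν) :=
    (Lp.aestronglyMeasurable u).comp_fst.mul (Lp.aestronglyMeasurable v).comp_snd
  rw [memLp_two_iff_integrable_sq hm]
  simpa only [mul_pow] using
    (Lp.memLp u).integrable_sq.mul_prod (Lp.memLp v).integrable_sq

theorem integrable_prod_mul_smul [SFinite ν] (u : Lp ℝ 2 μ) (v : Lp ℝ 2 ν) {g : α × β → E}
    (hg : MemLp g 2 (μ.prod ν)) : Integrable (fun z => (u z.1 * v z.2) • g z) (μ.prod ν) :=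
  memLp_one_iff_integrable.1 (hg.smul (memLp_two_prod_mul u v))

theorem integral_prod_mul_mul [SFinite μ] [SFinite ν] (u u' : Lp ℝ 2 μ) (v v' : Lp ℝ 2 ν) :
    ∫ z, u z.1 * v z.2 * (u' z.1 * v' z.2) ∂(μ.prod ν) = inner ℝ u u' * inner ℝ v v' := by
  rw [L2.real_inner_def, L2.real_inner_def, ← integral_prod_mul]
  congr 1 with z
  ring

theorem Orthonormal.prod_mul_self [SFinite μ] {e : ℕ → Lp ℝ 2 μ} (he : Orthonormal ℝ e) :
    Orthonormal ℝ fun k => (memLp_two_prod_mul (e k) (e k)).toLp _ := by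
  rw [orthonormal_iff_ite] at he ⊢
  intro k l
  have hΦ : ∀ m, (memLp_two_prod_mul (e m) (e m)).toLp _ =ᵐ[μ.prod μ]
      fun z => e m z.1 * e m z.2 := fun m => MemLp.coeFn_toLp _
  calc inner ℝ _ _ = inner ℝ (e k) (e l) * inner ℝ (e k) (e l) := by
        rw [L2.real_inner_def, ← integral_prod_mul_mul]
        exact integral_congr_ae ((hΦ k).mul (hΦ l))
    _ = if k = l then 1 else 0 := by rw [he]; split_ifs <;> simp

theorem Orthonormal.tendsto_integral_prod_mul_self_smul_zero [SFinite μ] [FiniteDimensional ℝ E]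
    {e : ℕ → Lp ℝ 2 μ} (he : Orthonormal ℝ e) {g : α × α → E} (hg : MemLp g 2 (μ.prod μ)) :
    Tendsto (fun k => ∫ z, (e k z.1 * e k z.2) • g z ∂(μ.prod μ)) atTop (𝓝 0) := by
  refine tendsto_integral_smul_zero_of_forall_real hg
    (fun k => integrable_prod_mul_smul _ _ hg) fun h hh => ?_
  refine (he.prod_mul_self.tendsto_inner_atTop_zero (hh.toLp h)).congr fun k => ?_
  rw [L2.real_inner_def]
  exact integral_congr_ae ((MemLp.coeFn_toLp _).mul hh.coeFn_toLp)

end Volterra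

section Levy

variable {α E : Type*} [MeasurableSpace α] {μ : Measure α} [NormedAddCommGroup E]
  [NormedSpace ℝ E]

def IsWeaklyUniformlyDense (μ : Measure α) (e : ℕ → α → ℝ) : Prop :=
  ∀ h : α → ℝ, MemLp h ⊤ μ → Tendsto (fun n : ℕ =>
    ∫ t, h t * ((1 / (n : ℝ)) * ∑ k ∈ Finset.range n, (e k t) ^ 2 - 1) ∂μ) atTop (𝓝 0)

theorem Lp.integrable_mul_self_smul {e : Lp ℝ 2 μ} {ℓ : α → E} (hℓ : MemLp ℓ ⊤ μ) :
    Integrable (fun t => (e t * e t) • ℓ t) μ :=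
  ((Lp.memLp e).integrable_mul (Lp.memLp e)).smul_of_top_left hℓ

theorem IsWeaklyUniformlyDense.tendsto_cesaro_integral_mul_self_smul [FiniteDimensional ℝ E]
    [IsFiniteMeasure μ] {e : ℕ → Lp ℝ 2 μ} (he : IsWeaklyUniformlyDense μ fun k => e k)
    {ℓ : α → E} (hℓ : MemLp ℓ ⊤ μ) :
    Tendsto (fun n : ℕ => (1 / (n : ℝ)) • ∑ k ∈ Finset.range n, ∫ t, (e k t * e k t) • ℓ t ∂μ)
      atTop (𝓝 (∫ t, ℓ t ∂μ)) := by
  set c : ℕ → α → ℝ := fun n t => (1 / (n : ℝ)) * ∑ k ∈ Finset.range n, (e k t) ^ 2 - 1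
  have hc : ∀ n, Integrable (c n) μ := fun n =>
    ((integrable_finsetSum _ fun k _ =>
      (Lp.memLp (e k)).integrable_sq).const_mul _).sub (integrable_const 1)
  have hcℓ : ∀ n, Integrable (fun t => c n t • ℓ t) μ := fun n => (hc n).smul_of_top_left hℓ
  have hsplit : ∀ n : ℕ, (1 / (n : ℝ)) • ∑ k ∈ Finset.range n, ∫ t, (e k t * e k t) • ℓ t ∂μ =
      (∫ t, c n t • ℓ t ∂μ) + ∫ t, ℓ t ∂μ := by
    intro n
    rw [← integral_finsetSum _ fun k _ => Lp.integrable_mul_self_smul hℓ, ← integral_smul,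
      ← integral_add (hcℓ n) (hℓ.integrable le_top)]
    congr 1 with t
    simp only [c, sub_smul, one_smul, sub_add_cancel, mul_smul, Finset.sum_smul, sq]
  have hlim : Tendsto (fun n => ∫ t, c n t • ℓ t ∂μ) atTop (𝓝 0) :=
    tendsto_integral_smul_zero_of_forall_real hℓ hcℓ fun h hh =>
      (he h hh).congr fun n => integral_congr_ae (.of_forall fun t => mul_comm _ _)
  simpa using (hlim.add_const (∫ t, ℓ t ∂μ)).congr fun n => (hsplit n).symm

end Levy

theorem stmt4_general (d N : ℕ)
    (e : ℕ → Lp ℝ 2 (MeasureTheory.volume.restrict (Set.Icc (0:ℝ) 1)))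
    (he : Orthonormal ℝ e)
    (he_wud : ∀ h : ℝ → ℝ, MeasureTheory.MemLp h ⊤
        (MeasureTheory.volume.restrict (Set.Icc (0:ℝ) 1)) →
      Tendsto (fun n : ℕ => ∫ t in Set.Icc (0:ℝ) 1,
          h t * ((1 / (n : ℝ)) * ∑ k ∈ Finset.range n, (e k t) ^ 2 - 1))
        atTop (nhds 0))
    (f : Lp (EuclideanSpace ℝ (Fin d)) 2 (MeasureTheory.volume.restrict (Set.Icc (0:ℝ) 1)) →
      Matrix (Fin N) (Fin N) ℂ)
    (x : Lp (EuclideanSpace ℝ (Fin d)) 2 (MeasureTheory.volume.restrict (Set.Icc (0:ℝ) 1)))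
    (ι : Fin d → Lp ℝ 2 (MeasureTheory.volume.restrict (Set.Icc (0:ℝ) 1)) →
      Lp (EuclideanSpace ℝ (Fin d)) 2 (MeasureTheory.volume.restrict (Set.Icc (0:ℝ) 1)))
    (KV : Fin d → ℝ × ℝ → Matrix (Fin N) (Fin N) ℂ)
    (hKV : ∀ μ, MeasureTheory.MemLp (KV μ) 2
      ((MeasureTheory.volume.restrict (Set.Icc (0:ℝ) 1)).prod
        (MeasureTheory.volume.restrict (Set.Icc (0:ℝ) 1))))
    (KL : Fin d → ℝ → Matrix (Fin N) (Fin N) ℂ)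
    (hKL : ∀ μ, MeasureTheory.MemLp (KL μ) ⊤
      (MeasureTheory.volume.restrict (Set.Icc (0:ℝ) 1)))
    (hrep : ∀ (μ : Fin d) (u v : Lp ℝ 2 (MeasureTheory.volume.restrict (Set.Icc (0:ℝ) 1))),
      fderiv ℝ (fderiv ℝ f) x (ι μ u) (ι μ v) =
        (∫ s in Set.Icc (0:ℝ) 1, ∫ t in Set.Icc (0:ℝ) 1, (u t * v s) • KV μ (s, t)) +
          ∫ t in Set.Icc (0:ℝ) 1, (u t * v t) • KL μ t) :
    Tendsto (fun n : ℕ => (1 / (n : ℝ)) •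
        ∑ k ∈ Finset.range n, ∑ μ : Fin d,
          fderiv ℝ (fderiv ℝ f) x (ι μ (e k)) (ι μ (e k)))
      atTop (nhds (∑ μ : Fin d, ∫ t in Set.Icc (0:ℝ) 1, KL μ t)) := by
  have hsplit : ∀ μ k, fderiv ℝ (fderiv ℝ f) x (ι μ (e k)) (ι μ (e k)) =
      (∫ z, (e k z.1 * e k z.2) • KV μ z ∂((volume.restrict (Set.Icc (0:ℝ) 1)).prod
        (volume.restrict (Set.Icc (0:ℝ) 1)))) + ∫ t in Set.Icc (0:ℝ) 1, (e k t * e k t) • KL μ t := by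
    intro μ k
    rw [hrep, integral_prod _ (integrable_prod_mul_smul _ _ (hKV μ))]
    refine congrArg (· + _) (integral_congr_ae (.of_forall fun s =>
      integral_congr_ae (.of_forall fun t => ?_)))
    exact congrArg (· • KV μ (s, t)) (mul_comm _ _)
  have hV := fun μ => (he.tendsto_integral_prod_mul_self_smul_zero (hKV μ)).cesaro_smul
  have hL := fun μ => IsWeaklyUniformlyDense.tendsto_cesaro_integral_mul_self_smul he_wud (hKL μ)
  have hlim := tendsto_finsetSum Finset.univ fun μ _ => (hV μ).add (hL μ)
  simp only [zero_add] at hlim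
  refine hlim.congr fun n => ?_
  simp_rw [hsplit, one_div, ← smul_add, ← Finset.smul_sum, ← Finset.sum_add_distrib]
  rw [Finset.sum_comm]

/-- Proposition 2: if the second partial derivatives of `f` along the coordinate
subspaces have a Volterra part `K^V_μ ∈ L²([0,1]²)` and a Lévy part `K^L_μ ∈ L^∞([0,1])`,
and `(e_k)` is a weakly uniformly dense orthonormal basis of `L²([0,1],ℝ)`, then the
classical Lévy Laplacian of `f` at `x` equals `∑_μ ∫₀¹ K^L_μ(t) dt`. -/
theorem stmt4 (d N : ℕ) (hd : 0 < d) (hN : 0 < N)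
    (e : ℕ → Lp ℝ 2 (MeasureTheory.volume.restrict (Set.Icc (0:ℝ) 1)))
    (he : Orthonormal ℝ e)
    (he_total : Dense (↑(Submodule.span ℝ (Set.range e)) :
      Set (Lp ℝ 2 (MeasureTheory.volume.restrict (Set.Icc (0:ℝ) 1)))))
    (he_wud : ∀ h : ℝ → ℝ, MeasureTheory.MemLp h ⊤
        (MeasureTheory.volume.restrict (Set.Icc (0:ℝ) 1)) →
      Tendsto (fun n : ℕ => ∫ t in Set.Icc (0:ℝ) 1,
          h t * ((1 / (n : ℝ)) * ∑ k ∈ Finset.range n, (e k t) ^ 2 - 1))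
        atTop (nhds 0))
    (f : Lp (EuclideanSpace ℝ (Fin d)) 2 (MeasureTheory.volume.restrict (Set.Icc (0:ℝ) 1)) →
      Matrix (Fin N) (Fin N) ℂ)
    (x : Lp (EuclideanSpace ℝ (Fin d)) 2 (MeasureTheory.volume.restrict (Set.Icc (0:ℝ) 1)))
    (hf : ∀ᶠ y in nhds x, DifferentiableAt ℝ f y)
    (hf' : DifferentiableAt ℝ (fderiv ℝ f) x)
    (ι : Fin d → Lp ℝ 2 (MeasureTheory.volume.restrict (Set.Icc (0:ℝ) 1)) →
      Lp (EuclideanSpace ℝ (Fin d)) 2 (MeasureTheory.volume.restrict (Set.Icc (0:ℝ) 1)))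
    (hι : ∀ μ u, ι μ u =
      (ContinuousLinearMap.toSpanSingleton ℝ (EuclideanSpace.single μ (1:ℝ))).compLp u)
    (KV : Fin d → ℝ × ℝ → Matrix (Fin N) (Fin N) ℂ)
    (hKV : ∀ μ, MeasureTheory.MemLp (KV μ) 2
      ((MeasureTheory.volume.restrict (Set.Icc (0:ℝ) 1)).prod
        (MeasureTheory.volume.restrict (Set.Icc (0:ℝ) 1))))
    (KL : Fin d → ℝ → Matrix (Fin N) (Fin N) ℂ)
    (hKL : ∀ μ, MeasureTheory.MemLp (KL μ) ⊤
      (MeasureTheory.volume.restrict (Set.Icc (0:ℝ) 1)))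
    (hrep : ∀ (μ : Fin d) (u v : Lp ℝ 2 (MeasureTheory.volume.restrict (Set.Icc (0:ℝ) 1))),
      fderiv ℝ (fderiv ℝ f) x (ι μ u) (ι μ v) =
        (∫ s in Set.Icc (0:ℝ) 1, ∫ t in Set.Icc (0:ℝ) 1, (u t * v s) • KV μ (s, t)) +
          ∫ t in Set.Icc (0:ℝ) 1, (u t * v t) • KL μ t) :
    Tendsto (fun n : ℕ => (1 / (n : ℝ)) •
        ∑ k ∈ Finset.range n, ∑ μ : Fin d,
          fderiv ℝ (fderiv ℝ f) x (ι μ (e k)) (ι μ (e k)))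
      atTop (nhds (∑ μ : Fin d, ∫ t in Set.Icc (0:ℝ) 1, KL μ t)) :=
  stmt4_general d N e he he_wud f x ι KV hKV KL hKL hrep
end

section
/- The orthonormal basis h_n(t) = √2 · sin(πnt), n ≥ 1, of L²([0,1],ℝ) is weakly uniformly dense: for every h ∈ L^∞([0,1],ℝ), lim_{n→∞} ∫₀¹ h(t) · ((1/n) Σ_{k=1}^n 2 sin²(πkt) − 1) dt = 0. -/
open Filter MeasureTheory Real

/-!
Since `2 sin² (k x) = 1 - cos (2 k x)`, the integrand is `-h(t)` times the Cesàro mean of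
`cos (2πkt)`. For `t ∉ ℤ` the partial sums of `cos (2πkt)` are real parts of a geometric sum
with ratio `e^{2πit} ≠ 1`, hence bounded, so the mean tends to `0` for almost every `t`.
The mean of `2 sin²` lies in `[0, 2]`, so `|h|` dominates the integrands and dominated
convergence concludes.
-/

lemma abs_sum_Icc_cos_nat_mul_le {θ : ℝ} (hθ : Complex.exp (θ * Complex.I) ≠ 1) (n : ℕ) :
    |∑ k ∈ Finset.Icc 1 n, cos (k * θ)| ≤ 2 / ‖Complex.exp (θ * Complex.I) - 1‖ := by
  set z := Complex.exp (θ * Complex.I)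
  have hpow : ∀ k : ℕ, z ^ k = Complex.exp ((k * θ : ℝ) * Complex.I) := fun k => by
    rw [← Complex.exp_nat_mul]; push_cast; ring_nf
  have hnorm : ∀ k : ℕ, ‖z ^ k‖ = 1 := fun k => by
    rw [hpow]; exact Complex.norm_exp_ofReal_mul_I _
  have hre : ∑ k ∈ Finset.Icc 1 n, cos (k * θ) = (∑ k ∈ Finset.Icc 1 n, z ^ k).re := by
    simp only [Complex.re_sum, hpow, Complex.exp_ofReal_mul_I_re]
  have hgeom : ∑ k ∈ Finset.Icc 1 n, z ^ k = (z ^ (n + 1) - z ^ 1) / (z - 1) := by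
    rw [← Finset.Ico_add_one_right_eq_Icc, geom_sum_Ico hθ (by omega)]
  calc |∑ k ∈ Finset.Icc 1 n, cos (k * θ)|
      ≤ ‖∑ k ∈ Finset.Icc 1 n, z ^ k‖ := hre ▸ Complex.abs_re_le_norm _
    _ = ‖z ^ (n + 1) - z ^ 1‖ / ‖z - 1‖ := by rw [hgeom, norm_div]
    _ ≤ (‖z ^ (n + 1)‖ + ‖z ^ 1‖) / ‖z - 1‖ := by gcongr; exact norm_sub_le _ _
    _ = 2 / ‖z - 1‖ := by rw [hnorm, hnorm]; norm_num

lemma tendsto_inv_mul_sum_Icc_cos_nat_mul {θ : ℝ} (hθ : Complex.exp (θ * Complex.I) ≠ 1) :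
    Tendsto (fun n : ℕ => (n : ℝ)⁻¹ * ∑ k ∈ Finset.Icc 1 n, cos (k * θ)) atTop (nhds 0) := by
  refine squeeze_zero_norm (fun n => ?_)
    (tendsto_const_div_atTop_nhds_zero_nat (2 / ‖Complex.exp (θ * Complex.I) - 1‖))
  rw [norm_mul, norm_inv, Real.norm_natCast, Real.norm_eq_abs, inv_mul_eq_div]
  gcongr
  exact abs_sum_Icc_cos_nat_mul_le hθ n

lemma inv_mul_sum_Icc_two_mul_sin_sq_sub_one {n : ℕ} (hn : n ≠ 0) (x : ℝ) :
    1 / (n : ℝ) * ∑ k ∈ Finset.Icc 1 n, 2 * sin (k * x) ^ 2 - 1 =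
      -((n : ℝ)⁻¹ * ∑ k ∈ Finset.Icc 1 n, cos (k * (2 * x))) := by
  have hsin : ∀ k : ℕ, 2 * sin (k * x) ^ 2 = 1 - cos (k * (2 * x)) := fun k => by
    rw [mul_left_comm, cos_two_mul_eq_one_sub]; ring
  simp only [hsin, Finset.sum_sub_distrib, Finset.sum_const, Nat.card_Icc, Nat.add_sub_cancel,
    nsmul_eq_mul, mul_one]
  rw [mul_sub, one_div, inv_mul_cancel₀ (by exact_mod_cast hn)]
  ring

lemma abs_inv_mul_sum_Icc_two_mul_sin_sq_sub_one_le (n : ℕ) (x : ℝ) :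
    |1 / (n : ℝ) * ∑ k ∈ Finset.Icc 1 n, 2 * sin (k * x) ^ 2 - 1| ≤ 1 := by
  have hsum : ∑ k ∈ Finset.Icc 1 n, 2 * sin (k * x) ^ 2 ≤ 2 * (n : ℝ) := by
    calc ∑ k ∈ Finset.Icc 1 n, 2 * sin (k * x) ^ 2 ≤ ∑ k ∈ Finset.Icc 1 n, (2 : ℝ) :=
          Finset.sum_le_sum fun k _ => by nlinarith [sin_sq_le_one (k * x)]
      _ = 2 * n := by simp [mul_comm]
  have hnonneg : 0 ≤ 1 / (n : ℝ) * ∑ k ∈ Finset.Icc 1 n, 2 * sin (k * x) ^ 2 :=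
    mul_nonneg (by positivity) (Finset.sum_nonneg fun k _ => by positivity)
  have hle : 1 / (n : ℝ) * ∑ k ∈ Finset.Icc 1 n, 2 * sin (k * x) ^ 2 ≤ 2 := by
    rcases Nat.eq_zero_or_pos n with rfl | hn
    · simp
    · rw [one_div_mul_eq_div, div_le_iff₀ (by positivity)]
      exact hsum
  rw [abs_le]
  constructor <;> linarith

lemma exp_two_mul_mul_I_ne_one {x : ℝ} (hx : sin x ≠ 0) :
    Complex.exp ((2 * x : ℝ) * Complex.I) ≠ 1 := by
  rw [Ne, Complex.exp_eq_one_iff]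
  rintro ⟨m, hm⟩
  have hxm : (x : ℂ) = (m * π : ℝ) := by
    push_cast at hm ⊢
    linear_combination (-Complex.I / 2) * hm + (x - m * π) * Complex.I_sq
  exact hx (Complex.ofReal_injective hxm ▸ sin_int_mul_pi m)

lemma tendsto_inv_mul_sum_Icc_two_mul_sin_sq_sub_one {x : ℝ} (hx : sin x ≠ 0) :
    Tendsto (fun n : ℕ => 1 / (n : ℝ) * ∑ k ∈ Finset.Icc 1 n, 2 * sin (k * x) ^ 2 - 1)
      atTop (nhds 0) := by
  have hcos := (tendsto_inv_mul_sum_Icc_cos_nat_mul (exp_two_mul_mul_I_ne_one hx)).neg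
  rw [neg_zero] at hcos
  refine hcos.congr' ?_
  filter_upwards [eventually_ne_atTop 0] with n hn
  exact (inv_mul_sum_Icc_two_mul_sin_sq_sub_one hn x).symm

lemma tendsto_integral_mul_of_tendsto_zero_of_abs_le {α : Type*} [MeasurableSpace α]
    {μ : Measure α} {h : α → ℝ} {g : ℕ → α → ℝ} {C : ℝ} (hh : Integrable h μ)
    (hg : ∀ n, AEStronglyMeasurable (g n) μ) (hbd : ∀ n t, |g n t| ≤ C)
    (hlim : ∀ᵐ t ∂μ, Tendsto (fun n => g n t) atTop (nhds 0)) :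
    Tendsto (fun n => ∫ t, h t * g n t ∂μ) atTop (nhds 0) := by
  have := tendsto_integral_of_dominated_convergence (F := fun n t => h t * g n t)
    (fun t => |h t| * C)
    (fun n => hh.aestronglyMeasurable.mul (hg n)) (hh.abs.mul_const C)
    (fun n => ae_of_all _ fun t => by
      rw [norm_mul, Real.norm_eq_abs, Real.norm_eq_abs]
      exact mul_le_mul_of_nonneg_left (hbd n t) (abs_nonneg _))
    (hlim.mono fun t ht => by simpa using ht.const_mul (h t))
  simpa using this

/-- The sine basis `h_n(t) = √2 sin(πnt)` of `L²([0,1],ℝ)` is weakly uniformly dense: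
for every `h ∈ L^∞([0,1],ℝ)`,
`lim_{n→∞} ∫₀¹ h(t) ((1/n) ∑_{k=1}^n 2 sin²(πkt) − 1) dt = 0`. -/
theorem stmt9 (h : ℝ → ℝ)
    (hh : MeasureTheory.MemLp h ⊤ (MeasureTheory.volume.restrict (Set.Icc (0:ℝ) 1))) :
    Tendsto (fun n : ℕ => ∫ t in Set.Icc (0:ℝ) 1,
        h t * ((1 / (n : ℝ)) * ∑ k ∈ Finset.Icc 1 n,
          2 * Real.sin (Real.pi * (k : ℝ) * t) ^ 2 - 1))
      atTop (nhds 0) := by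
  simp_rw [mul_comm π, mul_assoc]
  refine tendsto_integral_mul_of_tendsto_zero_of_abs_le (hh.integrable le_top)
    (fun n => (by fun_prop : Continuous _).aestronglyMeasurable)
    (fun n t => abs_inv_mul_sum_Icc_two_mul_sin_sq_sub_one_le n (π * t)) ?_
  rw [← Measure.restrict_congr_set Ioo_ae_eq_Icc]
  filter_upwards [ae_restrict_mem measurableSet_Ioo] with t ht
  exact tendsto_inv_mul_sum_Icc_two_mul_sin_sq_sub_one
    (sin_pos_of_pos_of_lt_pi (mul_pos pi_pos ht.1) (mul_lt_of_lt_one_right pi_pos ht.2)).ne'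
end

section
/- The orthonormal basis l_0(t) = 1, l_n(t) = √2 · cos(πnt) (n ≥ 1) of L²([0,1],ℝ) is weakly uniformly dense: for every h ∈ L^∞([0,1],ℝ), lim_{n→∞} ∫₀¹ h(t) · ((1/n)(1 + Σ_{k=1}^{n−1} 2 cos²(πkt)) − 1) dt = 0. -/
/-!
Since `2 cos²(πkt) = 1 + cos(2πkt)`, the integrand is `h(t) · (1/n) ∑_{k=1}^{n-1} cos(2πkt)`,
so the integral is the Cesàro mean of the cosine coefficients `∫₀¹ h(t) cos(2πkt) dt`
(up to an `O(1/n)` correction). These coefficients tend to `0` by the Riemann–Lebesgue lemma,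
hence so do their Cesàro means.
-/

open Filter MeasureTheory Real

theorem MeasureTheory.Integrable.mul_cos {μ : Measure ℝ} {f : ℝ → ℝ} (hf : Integrable f μ)
    (c : ℝ) : Integrable (fun t => f t * cos (c * t)) μ :=
  hf.mul_bdd (c := 1) (by fun_prop) (.of_forall fun t => by simpa using abs_cos_le_one _)

theorem tendsto_integral_mul_cos_cocompact {f : ℝ → ℝ} (hf : Integrable f) :
    Tendsto (fun x : ℝ => ∫ t, f t * cos (2 * π * x * t)) (cocompact ℝ) (nhds 0) := by
  have h := (Complex.continuous_re.tendsto 0).comp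
    (Real.zero_at_infty_fourier fun t => (f t : ℂ))
  rw [Complex.zero_re] at h
  refine h.congr fun x => ?_
  have hint : Integrable
      (fun t : ℝ => Complex.exp (↑(-2 * π * t * x) * Complex.I) • (f t : ℂ)) :=
    hf.ofReal.bdd_mul (c := 1) (by fun_prop)
      (.of_forall fun t => (Complex.norm_exp_ofReal_mul_I _).le)
  rw [Function.comp_apply, Real.fourier_real_eq_integral_exp_smul, ← Complex.reCLM_apply,
    ← Complex.reCLM.integral_comp_comm hint]
  refine integral_congr_ae (.of_forall fun t => ?_)
  simp only [Complex.reCLM_apply, smul_eq_mul, Complex.re_mul_ofReal,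
    Complex.exp_ofReal_mul_I_re]
  rw [mul_comm, ← cos_neg]
  ring_nf

theorem tendsto_setIntegral_mul_cos_cocompact {f : ℝ → ℝ} {s : Set ℝ} (hs : MeasurableSet s)
    (hf : IntegrableOn f s) :
    Tendsto (fun x : ℝ => ∫ t in s, f t * cos (2 * π * x * t)) (cocompact ℝ) (nhds 0) := by
  refine (tendsto_integral_mul_cos_cocompact ((integrable_indicator_iff hs).2 hf)).congr
    fun x => ?_
  rw [← integral_indicator hs]
  exact integral_congr_ae (.of_forall fun t =>
    (Set.indicator_mul_left s f fun t => cos (2 * π * x * t)).symm)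

theorem sum_two_mul_cos_sq (s : Finset ℕ) (t : ℝ) :
    ∑ k ∈ s, 2 * cos (π * k * t) ^ 2 = s.card + ∑ k ∈ s, cos (2 * π * k * t) := by
  rw [Finset.card_eq_sum_ones, Nat.cast_sum, ← Finset.sum_add_distrib]
  refine Finset.sum_congr rfl fun k _ => ?_
  rw [cos_sq, Nat.cast_one]
  ring_nf

theorem one_div_mul_one_add_sum_two_mul_cos_sq_sub_one {n : ℕ} (hn : n ≠ 0) (t : ℝ) :
    1 / (n : ℝ) * (1 + ∑ k ∈ Finset.Icc 1 (n - 1), 2 * cos (π * k * t) ^ 2) - 1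
      = (n : ℝ)⁻¹ * ∑ k ∈ Finset.Ico 1 n, cos (2 * π * k * t) := by
  rw [Finset.Icc_sub_one_right_eq_Ico_of_not_isMin (by simpa using hn), sum_two_mul_cos_sq,
    Nat.card_Ico, Nat.cast_sub (Nat.one_le_iff_ne_zero.2 hn)]
  generalize ∑ k ∈ Finset.Ico 1 n, cos (2 * π * k * t) = S
  field_simp
  ring

/-- The cosine basis `l_0(t) = 1`, `l_n(t) = √2 cos(πnt)` of `L²([0,1],ℝ)` is weakly
uniformly dense: for every `h ∈ L^∞([0,1],ℝ)`,
`lim_{n→∞} ∫₀¹ h(t) ((1/n)(1 + ∑_{k=1}^{n−1} 2 cos²(πkt)) − 1) dt = 0`. -/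
theorem stmt10 (h : ℝ → ℝ)
    (hh : MeasureTheory.MemLp h ⊤ (MeasureTheory.volume.restrict (Set.Icc (0:ℝ) 1))) :
    Tendsto (fun n : ℕ => ∫ t in Set.Icc (0:ℝ) 1,
        h t * ((1 / (n : ℝ)) * (1 + ∑ k ∈ Finset.Icc 1 (n - 1),
          2 * Real.cos (Real.pi * (k : ℝ) * t) ^ 2) - 1))
      atTop (nhds 0) := by
  have hint : IntegrableOn h (Set.Icc 0 1) := hh.integrable le_top
  set I : ℕ → ℝ := fun k => ∫ t in Set.Icc (0:ℝ) 1, h t * cos (2 * π * k * t)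
  have hI : Tendsto I atTop (nhds 0) :=
    (tendsto_setIntegral_mul_cos_cocompact measurableSet_Icc hint).comp
      (tendsto_natCast_atTop_atTop.mono_right atTop_le_cocompact)
  have hmean : Tendsto
      (fun n : ℕ => (n : ℝ)⁻¹ * ∑ k ∈ Finset.range n, I k - (n : ℝ)⁻¹ * I 0)
      atTop (nhds 0) := by
    simpa using hI.cesaro.sub
      ((tendsto_inv_atTop_zero.comp tendsto_natCast_atTop_atTop).mul_const (I 0))
  refine hmean.congr' ?_
  filter_upwards [eventually_ne_atTop 0] with n hn
  calc (n : ℝ)⁻¹ * ∑ k ∈ Finset.range n, I k - (n : ℝ)⁻¹ * I 0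
      = (n : ℝ)⁻¹ * ∑ k ∈ Finset.Ico 1 n, I k := by
        rw [Finset.sum_range_eq_add_Ico _ (Nat.pos_of_ne_zero hn)]
        ring
    _ = ∫ t in Set.Icc (0:ℝ) 1,
          (n : ℝ)⁻¹ * ∑ k ∈ Finset.Ico 1 n, h t * cos (2 * π * k * t) := by
        rw [integral_const_mul, integral_finsetSum _ fun k _ => hint.mul_cos _]
    _ = _ := by
        simp_rw [one_div_mul_one_add_sum_two_mul_cos_sq_sub_one hn, Finset.mul_sum]
        refine integral_congr_ae (.of_forall fun t => Finset.sum_congr rfl fun k _ => ?_)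
        ring
end
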